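/- Let f : ℝⁿ → ℝ be L-smooth with lower bound f⋆, and let x^{k+1} = x^k - (√(4/3)/L)∇f(x^k) for k = 1,…,N. Then min_{1≤k≤N+1} ‖∇f(x^k)‖ ≤ ( 6√3·L·(f(x¹) - f⋆) / (8N + 3√3) )^{1/2}. -/

import Mathlib

/-!
A Lipschitz gradient gives the two-sided bound `|f y - f c - ⟪∇f c, y - c⟫| ≤ L/2 ‖y - c‖²`;
comparing the lower bound around `a` with the upper bound around `b` at a well-chosen point yields
the interpolation inequality
`f a - f b ≤ ½⟪∇f a + ∇f b, a - b⟫ + L/4 ‖a - b‖² - 1/(4L) ‖∇f a - ∇f b‖²`.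
For a step `x⁺ = x - (s/L) ∇f x` with `s ≥ 1`, this together with `‖∇f x⁺ - ∇f x‖ ≤ s ‖∇f x‖`
shows that `f` decreases by at least `s(3 - s²)/(4L) ‖∇f x‖² + s/(4L) ‖∇f x⁺‖²`. For `s² = 4/3`
this is at least `2s/(3L)` times the smallest squared gradient norm `m²`; summing over the `N`
steps and adding `f(x_{N+1}) - f⋆ ≥ ‖∇f(x_{N+1})‖²/(2L) ≥ m²/(2L)` gives the bound.
-/

open RealInnerProductSpace

section LipschitzGradient

variable {E : Type*} [NormedAddCommGroup E] [InnerProductSpace ℝ E] [CompleteSpace E]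
  {f : E → ℝ} {L : ℝ}

theorem hasDerivAt_comp_add_smul (hf : Differentiable ℝ f) (c d : E) (t : ℝ) :
    HasDerivAt (fun t : ℝ => f (c + t • d)) ⟪gradient f (c + t • d), d⟫ t := by
  rw [inner_gradient_left]
  have hline : HasDerivAt (fun t : ℝ => c + t • d) d t := by
    simpa using ((hasDerivAt_id t).smul_const d).const_add c
  exact (hf _).hasFDerivAt.comp_hasDerivAt t hline

theorem abs_sub_sub_inner_gradient_le (hf : Differentiable ℝ f)
    (hlip : ∀ x y, ‖gradient f x - gradient f y‖ ≤ L * ‖x - y‖) (c y : E) :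
    |f y - f c - ⟪gradient f c, y - c⟫| ≤ L / 2 * ‖y - c‖ ^ 2 := by
  set d := y - c
  have hderiv (t : ℝ) : HasDerivAt (fun t : ℝ => f (c + t • d) - f c - t * ⟪gradient f c, d⟫)
      ⟪gradient f (c + t • d) - gradient f c, d⟫ t := by
    rw [inner_sub_left]
    exact ((hasDerivAt_comp_add_smul hf c d t).sub_const (f c)).sub
      (hasDerivAt_mul_const ⟪gradient f c, d⟫)
  have hquadratic (t : ℝ) : HasDerivAt (fun t : ℝ => L / 2 * ‖d‖ ^ 2 * t ^ 2) (L * ‖d‖ ^ 2 * t) t := by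
    refine ((hasDerivAt_pow 2 t).const_mul (L / 2 * ‖d‖ ^ 2)).congr_deriv ?_
    norm_num
    ring
  have habs := image_norm_le_of_norm_deriv_right_le_deriv_boundary
    (fun t _ => (hderiv t).continuousAt.continuousWithinAt)
    (fun t _ => (hderiv t).hasDerivWithinAt) (by simp) hquadratic
    (fun t ht => calc
      ‖⟪gradient f (c + t • d) - gradient f c, d⟫‖
          ≤ ‖gradient f (c + t • d) - gradient f c‖ * ‖d‖ := by
            rw [Real.norm_eq_abs]; exact abs_real_inner_le_norm _ _
        _ ≤ L * ‖(c + t • d) - c‖ * ‖d‖ := by gcongr; exact hlip _ _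
        _ = L * ‖d‖ ^ 2 * t := by
            rw [add_sub_cancel_left, norm_smul, Real.norm_of_nonneg ht.1]; ring)
    (Set.right_mem_Icc.2 zero_le_one)
  simpa [d] using habs

theorem image_sub_image_le_of_lipschitz_gradient (hL : 0 < L) (hf : Differentiable ℝ f)
    (hlip : ∀ x y, ‖gradient f x - gradient f y‖ ≤ L * ‖x - y‖) (a b : E) :
    f a - f b ≤ 1 / 2 * ⟪gradient f a + gradient f b, a - b⟫ + L / 4 * ‖a - b‖ ^ 2
      - 1 / (4 * L) * ‖gradient f a - gradient f b‖ ^ 2 := by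
  set u := gradient f a
  set v := gradient f b
  set z : E := (1 / 2 : ℝ) • (a + b) + (1 / (2 * L)) • (u - v)
  have hza := (abs_le.1 (abs_sub_sub_inner_gradient_le hf hlip a z)).1
  have hzb := (abs_le.1 (abs_sub_sub_inner_gradient_le hf hlip b z)).2
  have hid : ⟪v, z - b⟫ - ⟪u, z - a⟫ + L / 2 * (‖z - a‖ ^ 2 + ‖z - b‖ ^ 2)
      = 1 / 2 * ⟪u + v, a - b⟫ + L / 4 * ‖a - b‖ ^ 2 - 1 / (4 * L) * ‖u - v‖ ^ 2 := by
    simp only [z, ← real_inner_self_eq_norm_sq, inner_add_left, inner_add_right, inner_sub_left,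
      inner_sub_right, real_inner_smul_right, real_inner_comm]
    field_simp
    ring
  linarith

theorem sq_norm_gradient_le_of_lipschitz_gradient (hL : 0 < L) (hf : Differentiable ℝ f)
    (hlip : ∀ x y, ‖gradient f x - gradient f y‖ ≤ L * ‖x - y‖) {fstar : ℝ}
    (hlow : ∀ y, fstar ≤ f y) (x : E) :
    ‖gradient f x‖ ^ 2 ≤ 2 * L * (f x - fstar) := by
  set g := gradient f x
  have hdesc := (abs_le.1 (abs_sub_sub_inner_gradient_le hf hlip x (x - (1 / L) • g))).2
  rw [sub_sub_cancel_left, inner_neg_right, norm_neg, norm_smul, real_inner_smul_right,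
    real_inner_self_eq_norm_sq, Real.norm_of_nonneg (by positivity)] at hdesc
  have hval : L / 2 * (1 / L * ‖g‖) ^ 2 - 1 / L * ‖g‖ ^ 2 = -(‖g‖ ^ 2 / (2 * L)) := by
    field_simp
    ring
  have hgap : ‖g‖ ^ 2 / (2 * L) ≤ f x - fstar := by linarith [hlow (x - (1 / L) • g)]
  rwa [div_le_iff₀ (by positivity), mul_comm] at hgap

theorem le_image_sub_image_gradient_step (hL : 0 < L) (hf : Differentiable ℝ f)
    (hlip : ∀ x y, ‖gradient f x - gradient f y‖ ≤ L * ‖x - y‖) {s : ℝ} (hs : 1 ≤ s) (x : E) :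
    s * (3 - s ^ 2) / (4 * L) * ‖gradient f x‖ ^ 2
        + s / (4 * L) * ‖gradient f (x - (s / L) • gradient f x)‖ ^ 2
      ≤ f x - f (x - (s / L) • gradient f x) := by
  have hinterp :=
    image_sub_image_le_of_lipschitz_gradient hL hf hlip (x - (s / L) • gradient f x) x
  set u := gradient f x
  set x' := x - (s / L) • u
  set v := gradient f x'
  have hstep : x' - x = -((s / L) • u) := sub_sub_cancel_left _ _
  have hlip_step : ‖v - u‖ ≤ s * ‖u‖ := by
    calc ‖v - u‖ ≤ L * ‖x' - x‖ := hlip _ _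
      _ = s * ‖u‖ := by
        rw [hstep, norm_neg, norm_smul, Real.norm_of_nonneg (by positivity)]
        field_simp
  have hcross : ‖v - u‖ ^ 2 = ‖v‖ ^ 2 - 2 * ⟪v, u⟫ + ‖u‖ ^ 2 := norm_sub_sq_real v u
  have hsq : 0 ≤ (s - 1) * ((s * ‖u‖) ^ 2 - ‖v - u‖ ^ 2) :=
    mul_nonneg (sub_nonneg.2 hs) (sub_nonneg.2 (pow_le_pow_left₀ (norm_nonneg _) hlip_step 2))
  rw [hstep, inner_neg_right, real_inner_smul_right, inner_add_left, real_inner_self_eq_norm_sq,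
    norm_neg, norm_smul, Real.norm_of_nonneg (by positivity)] at hinterp
  have hquad : L / 4 * (s / L * ‖u‖) ^ 2 = s ^ 2 / (4 * L) * ‖u‖ ^ 2 := by
    field_simp
  rw [hquad] at hinterp
  linear_combination hinterp + hsq / (4 * L) - s / (4 * L) * hcross

end LipschitzGradient

theorem nat_mul_le_sub_of_forall_le_sub {F : ℕ → ℝ} {c : ℝ} {N : ℕ}
    (h : ∀ k, 1 ≤ k → k ≤ N → c ≤ F k - F (k + 1)) : N * c ≤ F 1 - F (N + 1) := by
  induction N with
  | zero => simp
  | succ N ih =>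
    have hprev := ih fun k hk hkN => h k hk (by omega)
    have hlast := h (N + 1) (by omega) le_rfl
    push_cast
    linarith

theorem stmt_9_general {n : ℕ} (f : EuclideanSpace ℝ (Fin n) → ℝ) (L : ℝ) (hL : 0 < L)
    (hf : Differentiable ℝ f)
    (hlip : ∀ x y, ‖gradient f x - gradient f y‖ ≤ L * ‖x - y‖)
    (fstar : ℝ) (hlow : ∀ y, fstar ≤ f y)
    (N : ℕ)
    (x : ℕ → EuclideanSpace ℝ (Fin n))
    (hupd : ∀ k, 1 ≤ k → k ≤ N →
      x (k + 1) = x k - (Real.sqrt (4 / 3) / L) • gradient f (x k)) :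
    ∃ k ∈ Finset.Icc 1 (N + 1),
      ‖gradient f (x k)‖ ≤
        Real.sqrt (6 * Real.sqrt 3 * L * (f (x 1) - fstar) / (8 * N + 3 * Real.sqrt 3)) := by
  set s := Real.sqrt (4 / 3)
  have hs_sq : s ^ 2 = 4 / 3 := Real.sq_sqrt (by norm_num)
  have hs_one : 1 ≤ s := Real.one_le_sqrt.2 (by norm_num)
  have hs_sqrt3 : s * Real.sqrt 3 = 2 := by
    rw [← Real.sqrt_mul (by norm_num), show (4 / 3 * 3 : ℝ) = 2 ^ 2 by norm_num,
      Real.sqrt_sq zero_le_two]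
  obtain ⟨k₀, hk₀, hmin⟩ := (Finset.Icc 1 (N + 1)).exists_min_image
    (fun k => ‖gradient f (x k)‖) ⟨1, by simp⟩
  refine ⟨k₀, hk₀, Real.le_sqrt_of_sq_le ?_⟩
  set m := ‖gradient f (x k₀)‖
  have hm_le (k : ℕ) (hk1 : 1 ≤ k) (hkN : k ≤ N + 1) : m ≤ ‖gradient f (x k)‖ :=
    hmin k (Finset.mem_Icc.2 ⟨hk1, hkN⟩)
  have hdecrease (k : ℕ) (hk1 : 1 ≤ k) (hkN : k ≤ N) :
      2 * s / (3 * L) * m ^ 2 ≤ f (x k) - f (x (k + 1)) := by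
    have hstep := le_image_sub_image_gradient_step hL hf hlip hs_one (x k)
    rw [← hupd k hk1 hkN, hs_sq] at hstep
    calc 2 * s / (3 * L) * m ^ 2 = s * (3 - 4 / 3) / (4 * L) * m ^ 2 + s / (4 * L) * m ^ 2 := by
          ring
      _ ≤ _ := by gcongr <;> exact hm_le _ (by omega) (by omega)
      _ ≤ _ := hstep
  have hdescent := nat_mul_le_sub_of_forall_le_sub hdecrease
  have hlast := sq_norm_gradient_le_of_lipschitz_gradient hL hf hlip hlow (x (N + 1))
  have hm_last : m ^ 2 / (2 * L) ≤ f (x (N + 1)) - fstar := by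
    rw [div_le_iff₀ (by positivity)]
    linarith [pow_le_pow_left₀ (norm_nonneg _) (hm_le (N + 1) (by omega) le_rfl) 2]
  rw [le_div_iff₀ (by positivity)]
  calc m ^ 2 * (8 * N + 3 * Real.sqrt 3)
      = 6 * Real.sqrt 3 * L * (N * (2 * s / (3 * L) * m ^ 2) + m ^ 2 / (2 * L)) := by
        field_simp
        linear_combination -24 * N * m ^ 2 * hs_sqrt3
    _ ≤ 6 * Real.sqrt 3 * L * (f (x 1) - fstar) := by
        gcongr
        linarith

theorem stmt_9 {n : ℕ} (f : EuclideanSpace ℝ (Fin n) → ℝ) (L : ℝ) (hL : 0 < L)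
    (hf : Differentiable ℝ f)
    (hlip : ∀ x y, ‖gradient f x - gradient f y‖ ≤ L * ‖x - y‖)
    (fstar : ℝ) (hlow : ∀ y, fstar ≤ f y)
    (N : ℕ) (hN : 1 ≤ N)
    (x : ℕ → EuclideanSpace ℝ (Fin n))
    (hupd : ∀ k, 1 ≤ k → k ≤ N →
      x (k + 1) = x k - (Real.sqrt (4 / 3) / L) • gradient f (x k)) :
    ∃ k ∈ Finset.Icc 1 (N + 1),
      ‖gradient f (x k)‖ ≤
        Real.sqrt (6 * Real.sqrt 3 * L * (f (x 1) - fstar) / (8 * N + 3 * Real.sqrt 3)) :=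
  stmt_9_general f L hL hf hlip fstar hlow N x hupd
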